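/- arXiv:2110.14432 — 2 statements merged into one kernel-verified Lean document; each statement's English description precedes it below -/
import Mathlib

section
/- One-step quasi-contraction under an Armijo-type condition (intermediate inequality in the proof of Theorem 2). Let E be a finite-dimensional real inner product space and ℓ : E → ℝ differentiable. Let w, w* ∈ E, μ ≥ 0, and assume the strong convexity inequality ℓ(w*) ≥ ℓ(w) + ⟨∇ℓ(w), w* − w⟩ + (μ/2)‖w* − w‖². Let η > 0, c_2 > 0, set w⁺ = w − η ∇ℓ(w), and assume the Armijo condition ℓ(w⁺) ≤ ℓ(w) − c_2 η ‖∇ℓ(w)‖² together with ℓ(w*) ≤ ℓ(w⁺). Then ‖w⁺ − w*‖² ≤ (1 − μη)‖w − w*‖² + (2η − η/c_2)(ℓ(w*) − ℓ(w)). -/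
/-!
Expand `‖w − η∇ℓ(w) − w*‖²`. Strong convexity at `(w, w*)` bounds the cross term
`−2η⟪∇ℓ(w), w − w*⟫` by `−μη‖w − w*‖² + 2η(ℓ(w*) − ℓ(w))`, while the Armijo condition
combined with `ℓ(w*) ≤ ℓ(w⁺)` gives `c₂η‖∇ℓ(w)‖² ≤ ℓ(w) − ℓ(w*)`, which bounds the
quadratic term `η²‖∇ℓ(w)‖²` by `(η/c₂)(ℓ(w) − ℓ(w*))`.
-/

open scoped RealInnerProductSpace

section GradientStep

variable {E : Type*} [NormedAddCommGroup E] [InnerProductSpace ℝ E]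

theorem norm_sub_smul_sub_sq (w v g : E) (η : ℝ) :
    ‖(w - η • g) - v‖ ^ 2 = ‖w - v‖ ^ 2 - 2 * η * ⟪g, w - v⟫ + η ^ 2 * ‖g‖ ^ 2 := by
  rw [sub_right_comm, norm_sub_sq_real, real_inner_smul_right, real_inner_comm, norm_smul,
    Real.norm_eq_abs, mul_pow, sq_abs]
  ring

theorem sq_mul_norm_sq_le_of_armijo {ℓ : E → ℝ} {w v g : E} {η c : ℝ} (hη : 0 ≤ η)
    (hc : 0 < c) (harmijo : ℓ (w - η • g) ≤ ℓ w - c * η * ‖g‖ ^ 2)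
    (hv : ℓ v ≤ ℓ (w - η • g)) :
    η ^ 2 * ‖g‖ ^ 2 ≤ η / c * (ℓ w - ℓ v) := by
  have hdecrease : c * (η * ‖g‖ ^ 2) ≤ ℓ w - ℓ v := by linarith
  calc η ^ 2 * ‖g‖ ^ 2 = η / c * (c * (η * ‖g‖ ^ 2)) := by field_simp
    _ ≤ η / c * (ℓ w - ℓ v) := by gcongr

end GradientStep

theorem one_step_quasi_contraction_armijo_general
    {E : Type*} [NormedAddCommGroup E] [InnerProductSpace ℝ E] [FiniteDimensional ℝ E]
    (ℓ : E → ℝ)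
    (w wstar : E) (μ : ℝ)
    (hsc : ℓ wstar ≥
      ℓ w + ⟪gradient ℓ w, wstar - w⟫ + (μ / 2) * ‖wstar - w‖ ^ 2)
    (η c₂ : ℝ) (hη : 0 < η) (hc₂ : 0 < c₂)
    (harmijo : ℓ (w - η • gradient ℓ w) ≤ ℓ w - c₂ * η * ‖gradient ℓ w‖ ^ 2)
    (hinterp : ℓ wstar ≤ ℓ (w - η • gradient ℓ w)) :
    ‖(w - η • gradient ℓ w) - wstar‖ ^ 2 ≤
      (1 - μ * η) * ‖w - wstar‖ ^ 2 + (2 * η - η / c₂) * (ℓ wstar - ℓ w) := by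
  rw [← neg_sub w wstar, inner_neg_right, norm_neg] at hsc
  have hcross : η * (ℓ w - ℓ wstar + μ / 2 * ‖w - wstar‖ ^ 2) ≤
      η * ⟪gradient ℓ w, w - wstar⟫ := by
    gcongr
    linarith
  have hquad := sq_mul_norm_sq_le_of_armijo hη.le hc₂ harmijo hinterp
  rw [norm_sub_smul_sub_sq]
  linarith

/-- **One-step quasi-contraction under an Armijo-type condition (intermediate
inequality in the proof of Theorem 2).** Under the strong convexity inequality at
`(w, w*)`, the Armijo condition `ℓ(w⁺) ≤ ℓ(w) − c₂ η ‖∇ℓ(w)‖²` for the step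
`w⁺ = w − η∇ℓ(w)`, and the interpolation inequality `ℓ(w*) ≤ ℓ(w⁺)`, one has
`‖w⁺ − w*‖² ≤ (1 − μη)‖w − w*‖² + (2η − η/c₂)(ℓ(w*) − ℓ(w))`. -/
theorem one_step_quasi_contraction_armijo
    {E : Type*} [NormedAddCommGroup E] [InnerProductSpace ℝ E] [FiniteDimensional ℝ E]
    (ℓ : E → ℝ) (hdiff : Differentiable ℝ ℓ)
    (w wstar : E) (μ : ℝ) (hμ : 0 ≤ μ)
    (hsc : ℓ wstar ≥
      ℓ w + ⟪gradient ℓ w, wstar - w⟫ + (μ / 2) * ‖wstar - w‖ ^ 2)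
    (η c₂ : ℝ) (hη : 0 < η) (hc₂ : 0 < c₂)
    (harmijo : ℓ (w - η • gradient ℓ w) ≤ ℓ w - c₂ * η * ‖gradient ℓ w‖ ^ 2)
    (hinterp : ℓ wstar ≤ ℓ (w - η • gradient ℓ w)) :
    ‖(w - η • gradient ℓ w) - wstar‖ ^ 2 ≤
      (1 - μ * η) * ‖w - wstar‖ ^ 2 + (2 * η - η / c₂) * (ℓ wstar - ℓ w) :=
  one_step_quasi_contraction_armijo_general ℓ w wstar μ hsc η c₂ hη hc₂ harmijo hinterp
end

section
/- Exponential teachability without target parameters (Theorem 2). Let E be a finite-dimensional real inner product space and ℓ_i : E → ℝ for i ∈ Fin n be differentiable, convex functions with L_i-Lipschitz gradients (L_i > 0) that are μ_i-strongly convex of order 2 with μ_i ≥ 0 (μ_i = 0 allowed), i.e. ℓ_i(v) ≥ ℓ_i(u) + ⟨∇ℓ_i(u), v − u⟩ + (μ_i/2)‖v − u‖² for all u, v. Assume the interpolation condition: w* ∈ E satisfies ℓ_i(w*) ≤ ℓ_i(u) for all u and all i. Let η_max > 0, let I_0, I_1, … be i.i.d. uniform random indices on Fin n, and define w^{t+1}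 = w^t − η_t ∇ℓ_{I_t}(w^t) from a deterministic w^0, where each (possibly random, index- and iterate-dependent) step size η_t satisfies min{1/L_{I_t}, η_max} ≤ η_t ≤ η_max and the Armijo condition with c_2 = 1/2: ℓ_{I_t}(w^{t+1}) ≤ ℓ_{I_t}(w^t) − (1/2) η_t ‖∇ℓ_{I_t}(w^t)‖². Set μ̄ = (1/n)Σ_i μ_i and L_max = max_i L_i. Then for all T ≥ 0, E‖w^T − w*‖² ≤ (max{1 − μ̄/L_max, 1 − μ̄ η_max})^T ‖w^0 − w*‖². -/
open scoped BigOperators RealInnerProductSpace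

/-!
Along every index path the squared distance to `w*` contracts by `1 - η_t μ_{I_t}` per step:
in the expansion of `‖x - η g - w*‖²`, strong convexity gives
`⟪g, x - w*⟫ ≥ ℓ(x) - ℓ(w*) + (μ/2)‖x - w*‖²`, and the Armijo condition with interpolation
`ℓ(w*) ≤ ℓ(x - η g)` gives `η‖g‖² ≤ 2(ℓ(x) - ℓ(w*))`, so the function values cancel.
With `c = min{1/L_max, η_max} ≤ η_t` and `μ_i ≤ L_i` the factor is at most `1 - c μ_i ≥ 0`;
averaging over the last index turns it into `1 - c μ̄`, which is the `max` of the statement.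
-/

section InnerProductSpace

variable {E : Type*} [NormedAddCommGroup E] [InnerProductSpace ℝ E]

theorem norm_sub_smul_sub_sq_le_of_armijo {f : E → ℝ} {g x wstar : E} {η μ : ℝ} (hη : 0 ≤ η)
    (hsc : f x + ⟪g, wstar - x⟫ + μ / 2 * ‖wstar - x‖ ^ 2 ≤ f wstar)
    (hmin : f wstar ≤ f (x - η • g))
    (harmijo : f (x - η • g) ≤ f x - 1 / 2 * η * ‖g‖ ^ 2) :
    ‖x - η • g - wstar‖ ^ 2 ≤ (1 - η * μ) * ‖x - wstar‖ ^ 2 := by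
  have hexpand : ‖x - η • g - wstar‖ ^ 2 =
      ‖x - wstar‖ ^ 2 - 2 * η * ⟪g, x - wstar⟫ + η ^ 2 * ‖g‖ ^ 2 := by
    rw [sub_right_comm, norm_sub_sq_real, inner_smul_right, norm_smul, real_inner_comm,
      Real.norm_eq_abs, mul_pow, sq_abs]
    ring
  have hinner : ⟪g, wstar - x⟫ = -⟪g, x - wstar⟫ := by rw [← inner_neg_right, neg_sub]
  rw [hinner, norm_sub_rev] at hsc
  rw [hexpand]
  nlinarith [mul_le_mul_of_nonneg_left (hmin.trans harmijo) hη]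

theorem mul_norm_sub_sq_le_inner_of_strongConvex {f : E → ℝ} {f' : E → E} {μ : ℝ}
    (hsc : ∀ u v, f u + ⟪f' u, v - u⟫ + μ / 2 * ‖v - u‖ ^ 2 ≤ f v) (u v : E) :
    μ * ‖u - v‖ ^ 2 ≤ ⟪f' u - f' v, u - v⟫ := by
  have huv := hsc u v
  have hvu := hsc v u
  rw [norm_sub_rev v u, ← neg_sub u v, inner_neg_right] at huv
  rw [inner_sub_left]
  linarith

theorem le_of_strongConvex_of_lipschitz [Nontrivial E] {f : E → ℝ} {f' : E → E} {μ L : ℝ}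
    (hsc : ∀ u v, f u + ⟪f' u, v - u⟫ + μ / 2 * ‖v - u‖ ^ 2 ≤ f v)
    (hlip : ∀ u v, ‖f' u - f' v‖ ≤ L * ‖u - v‖) : μ ≤ L := by
  obtain ⟨u, v, huv⟩ := exists_pair_ne E
  have hpos : 0 < ‖u - v‖ ^ 2 := pow_pos (norm_pos_iff.2 (sub_ne_zero.2 huv)) 2
  refine le_of_mul_le_mul_right ?_ hpos
  calc μ * ‖u - v‖ ^ 2 ≤ ⟪f' u - f' v, u - v⟫ := mul_norm_sub_sq_le_inner_of_strongConvex hsc u v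
    _ ≤ ‖f' u - f' v‖ * ‖u - v‖ := real_inner_le_norm _ _
    _ ≤ L * ‖u - v‖ * ‖u - v‖ := by gcongr; exact hlip u v
    _ = L * ‖u - v‖ ^ 2 := by ring

end InnerProductSpace

theorem Fin.sum_pi_succ_eq_sum_sum_snoc {α M : Type*} [Fintype α] [AddCommMonoid M] {T : ℕ}
    (F : (Fin (T + 1) → α) → M) :
    ∑ σ, F σ = ∑ i, ∑ σ' : Fin T → α, F (Fin.snoc σ' i) := by
  rw [← (Fin.snocEquiv fun _ => α).sum_comp, Fintype.sum_prod_type]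
  rfl

theorem sum_pi_le_pow_mul_of_le_mul {α R : Type*} [Fintype α] [CommSemiring R] [PartialOrder R]
    [IsOrderedRing R] (d : ∀ T, (Fin T → α) → R) (a : α → R)
    (ha : 0 ≤ ∑ i, a i)
    (hstep : ∀ T σ, d (T + 1) σ ≤ a (σ (Fin.last T)) * d T (Fin.init σ)) (T : ℕ) :
    ∑ σ, d T σ ≤ (∑ i, a i) ^ T * d 0 Fin.elim0 := by
  induction T with
  | zero => simp [Subsingleton.elim _ (Fin.elim0 : Fin 0 → α)]
  | succ T ih =>
    calc ∑ σ, d (T + 1) σ = ∑ i, ∑ σ' : Fin T → α, d (T + 1) (Fin.snoc σ' i) :=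
          Fin.sum_pi_succ_eq_sum_sum_snoc _
      _ ≤ ∑ i, ∑ σ' : Fin T → α, a i * d T σ' := by
          gcongr with i _ σ' _
          simpa using hstep T (Fin.snoc σ' i)
      _ = (∑ i, a i) * ∑ σ, d T σ := by simp only [← Finset.mul_sum, Finset.sum_mul]
      _ ≤ (∑ i, a i) * ((∑ i, a i) ^ T * d 0 Fin.elim0) := by gcongr
      _ = (∑ i, a i) ^ (T + 1) * d 0 Fin.elim0 := by ring

theorem exponential_teachability_without_target_general
    {E : Type*} [NormedAddCommGroup E] [InnerProductSpace ℝ E] [FiniteDimensional ℝ E]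
    (n : ℕ) (hn : 0 < n)
    (ℓ : Fin n → E → ℝ)
    (L : Fin n → ℝ) (hLpos : ∀ i, 0 < L i)
    (hlip : ∀ i (u v : E),
      ‖gradient (ℓ i) u - gradient (ℓ i) v‖ ≤ L i * ‖u - v‖)
    (μ : Fin n → ℝ) (hμ : ∀ i, 0 ≤ μ i)
    (hsc : ∀ i (u v : E),
      ℓ i v ≥ ℓ i u + ⟪gradient (ℓ i) u, v - u⟫ + (μ i / 2) * ‖v - u‖ ^ 2)
    (wstar : E) (hinterp : ∀ i (u : E), ℓ i wstar ≤ ℓ i u)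
    (ηmax : ℝ) (hηmax : 0 < ηmax)
    (w0 : E)
    (w : ∀ T : ℕ, (Fin T → Fin n) → E)
    (ηstep : ∀ T : ℕ, (Fin (T + 1) → Fin n) → ℝ)
    (hw0 : ∀ σ : Fin 0 → Fin n, w 0 σ = w0)
    (hwS : ∀ (T : ℕ) (σ : Fin (T + 1) → Fin n),
      w (T + 1) σ =
        w T (fun t => σ t.castSucc) -
          ηstep T σ • gradient (ℓ (σ (Fin.last T))) (w T (fun t => σ t.castSucc)))
    (hηlow : ∀ (T : ℕ) (σ : Fin (T + 1) → Fin n),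
      min (1 / L (σ (Fin.last T))) ηmax ≤ ηstep T σ)
    (harmijo : ∀ (T : ℕ) (σ : Fin (T + 1) → Fin n),
      ℓ (σ (Fin.last T)) (w (T + 1) σ) ≤
        ℓ (σ (Fin.last T)) (w T (fun t => σ t.castSucc)) -
          (1 / 2) * ηstep T σ *
            ‖gradient (ℓ (σ (Fin.last T))) (w T (fun t => σ t.castSucc))‖ ^ 2)
    (μbar Lmax : ℝ)
    (hμbar : μbar = (∑ i, μ i) / n)
    (hLmax : Lmax = Finset.univ.sup' ⟨⟨0, hn⟩, Finset.mem_univ _⟩ L) :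
    ∀ T : ℕ,
      (∑ σ : Fin T → Fin n, ‖w T σ - wstar‖ ^ 2) / (n : ℝ) ^ T ≤
        (max (1 - μbar / Lmax) (1 - μbar * ηmax)) ^ T * ‖w0 - wstar‖ ^ 2 := by
  intro T
  obtain hE | hE := subsingleton_or_nontrivial E
  · simp [Subsingleton.elim _ (0 : E)]
  have hLle : ∀ i, L i ≤ Lmax := fun i => hLmax ▸ Finset.le_sup' L (Finset.mem_univ i)
  obtain ⟨c, hc_def⟩ : ∃ c, c = min (1 / Lmax) ηmax := ⟨_, rfl⟩
  have hc : ∀ i, c ≤ min (1 / L i) ηmax := fun i =>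
    hc_def ▸ min_le_min_right _ (one_div_le_one_div_of_le (hLpos i) (hLle i))
  have hfactor : ∀ i, 0 ≤ 1 - c * μ i := fun i => by
    rw [sub_nonneg]
    have hμL := le_of_strongConvex_of_lipschitz (fun u v => hsc i u v) (hlip i)
    calc c * μ i ≤ 1 / L i * L i :=
          mul_le_mul ((hc i).trans (min_le_left _ _)) hμL (hμ i) (one_div_pos.2 (hLpos i)).le
      _ = 1 := one_div_mul_cancel (hLpos i).ne'
  have hstep : ∀ T σ, ‖w (T + 1) σ - wstar‖ ^ 2 ≤
      (1 - c * μ (σ (Fin.last T))) * ‖w T (Fin.init σ) - wstar‖ ^ 2 := fun T σ => by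
    have hη := (hc _).trans (hηlow T σ)
    have hη0 : 0 ≤ ηstep T σ := (lt_min (one_div_pos.2 (hLpos _)) hηmax).le.trans (hηlow T σ)
    rw [hwS]
    refine (norm_sub_smul_sub_sq_le_of_armijo hη0 (hsc _ _ _) (hwS T σ ▸ hinterp _ _)
      (hwS T σ ▸ harmijo T σ)).trans (mul_le_mul_of_nonneg_right ?_ (sq_nonneg _))
    exact sub_le_sub_left (mul_le_mul_of_nonneg_right hη (hμ _)) 1
  have hρ : max (1 - μbar / Lmax) (1 - μbar * ηmax) = (∑ i, (1 - c * μ i)) / n := by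
    have hμbar0 : 0 ≤ μbar := hμbar ▸ div_nonneg (Finset.sum_nonneg fun i _ => hμ i) n.cast_nonneg
    rw [div_eq_mul_one_div μbar, max_sub_sub_left, ← mul_min_of_nonneg _ _ hμbar0, ← hc_def,
      Finset.sum_sub_distrib, ← Finset.mul_sum, hμbar]
    field_simp
    simp
  have hsum := sum_pi_le_pow_mul_of_le_mul (fun T σ => ‖w T σ - wstar‖ ^ 2) _
    (Finset.sum_nonneg fun i _ => hfactor i) hstep T
  rw [hρ, div_pow, div_mul_eq_mul_div]
  exact div_le_div_of_nonneg_right (hw0 Fin.elim0 ▸ hsum) (by positivity)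

/-- **Exponential teachability without target parameters (Theorem 2).** For convex
differentiable losses `ℓ_i` with `L_i`-Lipschitz gradients that are `μ_i`-strongly convex
of order 2, under the interpolation condition that `w*` minimizes every `ℓ_i`, the
stochastic gradient iteration `w^{t+1} = w^t − η_t ∇ℓ_{I_t}(w^t)` with i.i.d. uniform
indices (encoded as averages over index sequences `σ : Fin T → Fin n`) and step sizes
satisfying `min{1/L_{I_t}, ηmax} ≤ η_t ≤ ηmax` and the Armijo condition with `c₂ = 1/2`
satisfies
`E‖w^T − w*‖² ≤ (max{1 − μ̄/L_max, 1 − μ̄ ηmax})^T ‖w^0 − w*‖²`. -/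
theorem exponential_teachability_without_target
    {E : Type*} [NormedAddCommGroup E] [InnerProductSpace ℝ E] [FiniteDimensional ℝ E]
    (n : ℕ) (hn : 0 < n)
    (ℓ : Fin n → E → ℝ) (hdiff : ∀ i, Differentiable ℝ (ℓ i))
    (hconv : ∀ i, ConvexOn ℝ Set.univ (ℓ i))
    (L : Fin n → ℝ) (hLpos : ∀ i, 0 < L i)
    (hlip : ∀ i (u v : E),
      ‖gradient (ℓ i) u - gradient (ℓ i) v‖ ≤ L i * ‖u - v‖)
    (μ : Fin n → ℝ) (hμ : ∀ i, 0 ≤ μ i)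
    (hsc : ∀ i (u v : E),
      ℓ i v ≥ ℓ i u + ⟪gradient (ℓ i) u, v - u⟫ + (μ i / 2) * ‖v - u‖ ^ 2)
    (wstar : E) (hinterp : ∀ i (u : E), ℓ i wstar ≤ ℓ i u)
    (ηmax : ℝ) (hηmax : 0 < ηmax)
    (w0 : E)
    (w : ∀ T : ℕ, (Fin T → Fin n) → E)
    (ηstep : ∀ T : ℕ, (Fin (T + 1) → Fin n) → ℝ)
    (hw0 : ∀ σ : Fin 0 → Fin n, w 0 σ = w0)
    (hwS : ∀ (T : ℕ) (σ : Fin (T + 1) → Fin n),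
      w (T + 1) σ =
        w T (fun t => σ t.castSucc) -
          ηstep T σ • gradient (ℓ (σ (Fin.last T))) (w T (fun t => σ t.castSucc)))
    (hηlow : ∀ (T : ℕ) (σ : Fin (T + 1) → Fin n),
      min (1 / L (σ (Fin.last T))) ηmax ≤ ηstep T σ)
    (hηhigh : ∀ (T : ℕ) (σ : Fin (T + 1) → Fin n), ηstep T σ ≤ ηmax)
    (harmijo : ∀ (T : ℕ) (σ : Fin (T + 1) → Fin n),
      ℓ (σ (Fin.last T)) (w (T + 1) σ) ≤
        ℓ (σ (Fin.last T)) (w T (fun t => σ t.castSucc)) -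
          (1 / 2) * ηstep T σ *
            ‖gradient (ℓ (σ (Fin.last T))) (w T (fun t => σ t.castSucc))‖ ^ 2)
    (μbar Lmax : ℝ)
    (hμbar : μbar = (∑ i, μ i) / n)
    (hLmax : Lmax = Finset.univ.sup' ⟨⟨0, hn⟩, Finset.mem_univ _⟩ L) :
    ∀ T : ℕ,
      (∑ σ : Fin T → Fin n, ‖w T σ - wstar‖ ^ 2) / (n : ℝ) ^ T ≤
        (max (1 - μbar / Lmax) (1 - μbar * ηmax)) ^ T * ‖w0 - wstar‖ ^ 2 :=
  exponential_teachability_without_target_general n hn ℓ L hLpos hlip μ hμ hsc wstar hinterp ηmax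
    hηmax w0 w ηstep hw0 hwS hηlow harmijo μbar Lmax hμbar hLmax
end
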